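/- Fix a training data set (E, λ) over d features and a decision tree T, and let x₀ ∈ ℝ be smaller than every feature value of every example. For a leaf v, Qᵉˣ[v, (l_i, r_i), k′] equals min(|{e ∈ E[(l_i, r_i)] : λ(e) = blue}|, |{e ∈ E[(l_i, r_i)] : λ(e) = red}|). For a cut v of T with left child w and right child u, Qᵉˣ[v, (l_i, r_i), k′] equals the minimum of: (a) the minimum over β ∈ {0, …, k′} of Qᵉˣ[w, L_{feat(v)}(thr(v)), β] + Qᵉˣ[u, R_{feat(v)}(thr(v)), k′ − β]; and (b) if k′ ≥ 1, the minimum over β ∈ {0, …, k′ − 1}, j′ ∈ {1, …, d}, and x ∈ {e[j′] : e ∈ E} ∪ {x₀} of Qᵉˣ[w, L_{j′}(x), β] + Qᵉˣ[u, R_{j′}(x), k′ − β − 1]; here L_{j}(x) denotes the threshold sequence obtained from (l_i, r_i) by replacing the j-th interval with (l_j, min(r_j, x)], and R_{j}(x) the one obtained by replacing the j-th interval with (max(l_j, x), r_j]. -/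

import Mathlib

/-- The two class labels. -/
def blue : Bool := true

def red : Bool := false

/-- Decision trees with features of type `α`: each leaf carries a class label,
each internal node (a *cut*) carries a feature and a real threshold. -/
inductive DTree (α : Type) : Type
  | leaf (label : Bool) : DTree α
  | node (feat : α) (thr : ℝ) (left right : DTree α) : DTree α

namespace DTree

/-- The class that the tree assigns to the example `e`. -/
noncomputable def classify {α : Type} : DTree α → (α → ℝ) → Bool
  | leaf c, _ => c
  | node f x l r, e => if e f ≤ x then l.classify e else r.classify e

end DTree

/-- `T'` has the same underlying tree shape as `T`; features, thresholds and leaf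
labels may all differ. -/
def SameShape {α : Type} : DTree α → DTree α → Prop
  | DTree.leaf _, DTree.leaf _ => True
  | DTree.node _ _ l r, DTree.node _ _ l' r' => SameShape l l' ∧ SameShape r r'
  | _, _ => False

/-- The number of cuts at which the (feature, threshold) pairs of the two
(same-shaped) trees differ, i.e. the number of cut exchanges performed. -/
noncomputable def exCost {α : Type} [DecidableEq α] : DTree α → DTree α → ℕ
  | DTree.node f x l r, DTree.node f' x' l' r' =>
      (if f = f' ∧ x = x' then 0 else 1) + exCost l l' + exCost r r'
  | _, _ => 0

open Classical in
/-- The box `E[(l_i, r_i)]` of a threshold sequence: the examples `e` with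
`l i < e i ≤ r i` for every feature `i`. -/
noncomputable def box {d n : ℕ} (E : Fin n → Fin d → ℝ) (l r : Fin d → EReal) :
    Finset (Fin n) :=
  Finset.univ.filter
    (fun i => ∀ a : Fin d, l a < ((E i a : ℝ) : EReal) ∧ ((E i a : ℝ) : EReal) ≤ r a)

/-- Errors of `T` among the examples indexed by `S`. -/
noncomputable def errorCountOn {d n : ℕ} (E : Fin n → Fin d → ℝ)
    (lab : Fin n → Bool) (S : Finset (Fin n)) (T : DTree (Fin d)) : ℕ :=
  (S.filter (fun i => T.classify (E i) ≠ lab i)).card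

/-- `Qex E lab T l r k'`: the minimum number of errors, on the family `E[(l, r)]`, of a
decision tree obtained from the subtree `T` by replacing the features and thresholds of
at most `k'` of its cuts by arbitrary features in `Fin d` and arbitrary real numbers
and relabeling its leaves arbitrarily. -/
noncomputable def Qex {d n : ℕ} (E : Fin n → Fin d → ℝ) (lab : Fin n → Bool)
    (T : DTree (Fin d)) (l r : Fin d → EReal) (k' : ℕ) : ℕ :=
  sInf {m : ℕ | ∃ T' : DTree (Fin d), SameShape T T' ∧ exCost T T' ≤ k' ∧
    errorCountOn E lab (box E l r) T' = m}

/-!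
Choosing the new cuts of an optimal tree one node at a time is a decomposable problem: a cut
`(f, y)` sends the examples of the box `E[(l, r)]` with `e f ≤ y` to the left subtree and the
others to the right subtree, and these are exactly the boxes obtained by clipping the `f`-th
interval at `y`. The exchange budget is split between the two subtrees, one unit being spent at
the root if its cut changes. A new threshold `y` only matters through the partition it induces
on the values `e f`, so it can be replaced by the largest value `e f ≤ y`, or by `x₀` if there
is none.
-/

lemma sameShape_refl {α : Type} (T : DTree α) : SameShape T T := by
  induction T with
  | leaf c => trivial
  | node f x L R ihl ihr => exact ⟨ihl, ihr⟩

lemma exCost_self {α : Type} [DecidableEq α] (T : DTree α) : exCost T T = 0 := by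
  induction T with
  | leaf c => rfl
  | node f x L R ihl ihr => simp [exCost, ihl, ihr]

lemma exists_mem_insert_image_le_iff {ι : Type} [Fintype ι] (v : ι → ℝ) {x₀ : ℝ}
    (hx₀ : ∀ i, x₀ < v i) (x : ℝ) :
    ∃ y ∈ insert x₀ (Finset.univ.image v), ∀ i, v i ≤ x ↔ v i ≤ y := by
  classical
  set S := (Finset.univ.image v).filter (· ≤ x)
  have hmem : ∀ i, v i ≤ x → v i ∈ S := fun i h =>
    Finset.mem_filter.mpr ⟨Finset.mem_image_of_mem v (Finset.mem_univ i), h⟩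
  by_cases hS : S.Nonempty
  · obtain ⟨hmax_mem, hmax_le⟩ := Finset.mem_filter.mp (S.max'_mem hS)
    exact ⟨S.max' hS, Finset.mem_insert_of_mem hmax_mem,
      fun i => ⟨fun h => S.le_max' _ (hmem i h), (·.trans hmax_le)⟩⟩
  · exact ⟨x₀, Finset.mem_insert_self _ _,
      fun i => ⟨fun h => absurd ⟨_, hmem i h⟩ hS, fun h => absurd h (hx₀ i).not_ge⟩⟩

section Qex

variable {d n : ℕ} (E : Fin n → Fin d → ℝ) (lab : Fin n → Bool)

lemma Qex_le_errorCountOn {T T' : DTree (Fin d)} {l r : Fin d → EReal} {k : ℕ}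
    (hshape : SameShape T T') (hcost : exCost T T' ≤ k) :
    Qex E lab T l r k ≤ errorCountOn E lab (box E l r) T' :=
  Nat.sInf_le ⟨T', hshape, hcost, rfl⟩

lemma exists_errorCountOn_eq_Qex (T : DTree (Fin d)) (l r : Fin d → EReal) (k : ℕ) :
    ∃ T', SameShape T T' ∧ exCost T T' ≤ k ∧
      errorCountOn E lab (box E l r) T' = Qex E lab T l r k := by
  unfold Qex
  exact Nat.sInf_mem (s := {m | ∃ T', SameShape T T' ∧ exCost T T' ≤ k ∧
    errorCountOn E lab (box E l r) T' = m}) ⟨_, T, sameShape_refl T, by simp [exCost_self], rfl⟩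

lemma Qex_antitone (T : DTree (Fin d)) (l r : Fin d → EReal) :
    Antitone (Qex E lab T l r) := by
  intro k₁ k₂ hk
  obtain ⟨T', hshape, hcost, herr⟩ := exists_errorCountOn_eq_Qex E lab T l r k₁
  exact herr ▸ Qex_le_errorCountOn E lab hshape (hcost.trans hk)

lemma errorCountOn_leaf (S : Finset (Fin n)) (c : Bool) :
    errorCountOn E lab S (DTree.leaf c) = (S.filter (fun i => lab i = !c)).card := by
  unfold errorCountOn
  congr 1
  exact Finset.filter_congr fun i _ => by cases c <;> cases lab i <;> simp [DTree.classify]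

lemma Qex_leaf (l r : Fin d → EReal) (k : ℕ) (c : Bool) :
    Qex E lab (DTree.leaf c) l r k =
      min ((box E l r).filter (fun i => lab i = blue)).card
        ((box E l r).filter (fun i => lab i = red)).card := by
  apply le_antisymm
  · have hle (c' : Bool) := Qex_le_errorCountOn E lab (T := DTree.leaf c) (T' := DTree.leaf c')
      (l := l) (r := r) trivial (Nat.zero_le k)
    exact le_min ((hle red).trans_eq (errorCountOn_leaf E lab _ red))
      ((hle blue).trans_eq (errorCountOn_leaf E lab _ blue))
  · obtain ⟨T', hshape, -, herr⟩ := exists_errorCountOn_eq_Qex E lab (DTree.leaf c) l r k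
    rw [← herr]
    cases T' with
    | node => exact hshape.elim
    | leaf c' =>
      rw [errorCountOn_leaf]
      cases c'
      · exact min_le_left _ _
      · exact min_le_right _ _

open Classical in
lemma box_filter_le (l r : Fin d → EReal) (j : Fin d) (x : ℝ) :
    (box E l r).filter (fun i => E i j ≤ x) =
      box E l (Function.update r j (min (r j) (x : EReal))) := by
  ext i
  simp only [box, Finset.mem_filter, Finset.mem_univ, true_and]
  constructor
  · rintro ⟨h, hx⟩ a
    rcases eq_or_ne a j with rfl | hne
    · rw [Function.update_self]
      exact ⟨(h a).1, le_min (h a).2 (EReal.coe_le_coe_iff.mpr hx)⟩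
    · simpa [Function.update_of_ne hne] using h a
  · intro h
    have hj := h j
    simp only [Function.update_self, le_min_iff] at hj
    refine ⟨fun a => ?_, EReal.coe_le_coe_iff.mp hj.2.2⟩
    rcases eq_or_ne a j with rfl | hne
    · exact ⟨hj.1, hj.2.1⟩
    · simpa [Function.update_of_ne hne] using h a

open Classical in
lemma box_filter_not_le (l r : Fin d → EReal) (j : Fin d) (x : ℝ) :
    (box E l r).filter (fun i => ¬ E i j ≤ x) =
      box E (Function.update l j (max (l j) (x : EReal))) r := by
  ext i
  simp only [box, Finset.mem_filter, Finset.mem_univ, true_and]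
  constructor
  · rintro ⟨h, hx⟩ a
    rcases eq_or_ne a j with rfl | hne
    · rw [Function.update_self, max_lt_iff]
      exact ⟨⟨(h a).1, EReal.coe_lt_coe_iff.mpr (not_le.mp hx)⟩, (h a).2⟩
    · simpa [Function.update_of_ne hne] using h a
  · intro h
    have hj := h j
    simp only [Function.update_self, max_lt_iff] at hj
    refine ⟨fun a => ?_, not_le.mpr (EReal.coe_lt_coe_iff.mp hj.1.2)⟩
    rcases eq_or_ne a j with rfl | hne
    · exact ⟨hj.1.1, hj.2⟩
    · simpa [Function.update_of_ne hne] using h a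

open Classical in
lemma errorCountOn_node (S : Finset (Fin n)) (f : Fin d) (x : ℝ) (L R : DTree (Fin d)) :
    errorCountOn E lab S (DTree.node f x L R) =
      errorCountOn E lab (S.filter (fun i => E i f ≤ x)) L +
        errorCountOn E lab (S.filter (fun i => ¬ E i f ≤ x)) R := by
  unfold errorCountOn
  rw [Finset.filter_filter, Finset.filter_filter, ← Finset.card_union_of_disjoint]
  · congr 1
    ext i
    rw [Finset.mem_union, Finset.mem_filter, Finset.mem_filter, Finset.mem_filter]
    by_cases h : E i f ≤ x <;> simp [DTree.classify, h]
  · exact Finset.disjoint_filter.mpr fun i _ hl hr => hr.1 hl.1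

lemma errorCountOn_box_node (l r : Fin d → EReal) (f : Fin d) (x : ℝ) (L R : DTree (Fin d)) :
    errorCountOn E lab (box E l r) (DTree.node f x L R) =
      errorCountOn E lab (box E l (Function.update r f (min (r f) (x : EReal)))) L +
        errorCountOn E lab (box E (Function.update l f (max (l f) (x : EReal))) r) R := by
  classical
  rw [errorCountOn_node, box_filter_le, box_filter_not_le]

lemma errorCountOn_node_congr_thr (S : Finset (Fin n)) (f : Fin d) {x y : ℝ}
    (hxy : ∀ i, E i f ≤ x ↔ E i f ≤ y) (L R : DTree (Fin d)) :
    errorCountOn E lab S (DTree.node f x L R) = errorCountOn E lab S (DTree.node f y L R) := by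
  unfold errorCountOn
  congr 1
  exact Finset.filter_congr fun i _ => by simp only [DTree.classify, hxy i]

/-- Options (a) and (b) of the recurrence: keep the cut `(j, x)`, or exchange it for `(j', y)`. -/
def nodeCandidates (x₀ : ℝ) (j : Fin d) (x : ℝ) (w u : DTree (Fin d)) (l r : Fin d → EReal)
    (k : ℕ) : Set ℕ :=
  {m : ℕ | ∃ β ≤ k,
    m = Qex E lab w l (Function.update r j (min (r j) (x : EReal))) β
      + Qex E lab u (Function.update l j (max (l j) (x : EReal))) r (k - β)}
  ∪ {m : ℕ | ∃ β, β + 1 ≤ k ∧ ∃ j' : Fin d,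
    ∃ y ∈ insert x₀ (Finset.univ.image (fun i : Fin n => E i j')),
      m = Qex E lab w l (Function.update r j' (min (r j') (y : EReal))) β
        + Qex E lab u (Function.update l j' (max (l j') (y : EReal))) r
            (k - β - 1)}

lemma Qex_node_le_add {j j' : Fin d} {x y : ℝ} (w u : DTree (Fin d)) (l r : Fin d → EReal)
    {k β γ : ℕ} (hbudget : (if j = j' ∧ x = y then 0 else 1) + β + γ ≤ k) :
    Qex E lab (DTree.node j x w u) l r k ≤
      Qex E lab w l (Function.update r j' (min (r j') (y : EReal))) β +
        Qex E lab u (Function.update l j' (max (l j') (y : EReal))) r γ := by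
  obtain ⟨w', hw, hcw, herrw⟩ := exists_errorCountOn_eq_Qex E lab w l _ β
  obtain ⟨u', hu, hcu, herru⟩ := exists_errorCountOn_eq_Qex E lab u _ r γ
  calc Qex E lab (DTree.node j x w u) l r k
      ≤ errorCountOn E lab (box E l r) (DTree.node j' y w' u') :=
        Qex_le_errorCountOn E lab ⟨hw, hu⟩ (by simp only [exCost]; omega)
    _ = _ := by rw [errorCountOn_box_node, herrw, herru]

lemma Qex_node_le_of_mem_nodeCandidates {x₀ : ℝ} {j : Fin d} {x : ℝ} {w u : DTree (Fin d)}
    {l r : Fin d → EReal} {k m : ℕ} (hm : m ∈ nodeCandidates E lab x₀ j x w u l r k) :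
    Qex E lab (DTree.node j x w u) l r k ≤ m := by
  rcases hm with ⟨β, hβ, rfl⟩ | ⟨β, hβ, j', y, -, rfl⟩
  · exact Qex_node_le_add E lab w u l r (by simp only [and_self, if_true]; omega)
  · exact Qex_node_le_add E lab w u l r (by split <;> omega)

lemma exists_mem_nodeCandidates_le_errorCountOn {x₀ : ℝ} (hx₀ : ∀ i j, x₀ < E i j)
    {j : Fin d} {x : ℝ} {w u T' : DTree (Fin d)} {l r : Fin d → EReal} {k : ℕ}
    (hshape : SameShape (DTree.node j x w u) T') (hcost : exCost (DTree.node j x w u) T' ≤ k) :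
    ∃ m ∈ nodeCandidates E lab x₀ j x w u l r k, m ≤ errorCountOn E lab (box E l r) T' := by
  cases T' with
  | leaf => exact hshape.elim
  | node j' x' w' u' =>
    obtain ⟨hw, hu⟩ := hshape
    simp only [exCost] at hcost
    by_cases hkeep : j = j' ∧ x = x'
    · obtain ⟨rfl, rfl⟩ := hkeep
      rw [if_pos ⟨rfl, rfl⟩] at hcost
      refine ⟨_, Or.inl ⟨exCost w w', by omega, rfl⟩, ?_⟩
      rw [errorCountOn_box_node]
      exact add_le_add (Qex_le_errorCountOn E lab hw le_rfl)
        ((Qex_antitone E lab u _ _ (by omega)).trans (Qex_le_errorCountOn E lab hu le_rfl))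
    · rw [if_neg hkeep] at hcost
      obtain ⟨y, hy, hxy⟩ := exists_mem_insert_image_le_iff (E · j') (hx₀ · j') x'
      refine ⟨_, Or.inr ⟨exCost w w', by omega, j', y, hy, rfl⟩, ?_⟩
      rw [errorCountOn_node_congr_thr E lab _ j' hxy, errorCountOn_box_node]
      exact add_le_add (Qex_le_errorCountOn E lab hw le_rfl)
        ((Qex_antitone E lab u _ _ (by omega)).trans (Qex_le_errorCountOn E lab hu le_rfl))

theorem Qex_node {x₀ : ℝ} (hx₀ : ∀ i j, x₀ < E i j) (j : Fin d) (x : ℝ)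
    (w u : DTree (Fin d)) (l r : Fin d → EReal) (k : ℕ) :
    Qex E lab (DTree.node j x w u) l r k = sInf (nodeCandidates E lab x₀ j x w u l r k) := by
  apply le_antisymm
  · exact le_csInf ⟨_, Or.inl ⟨0, Nat.zero_le k, rfl⟩⟩
      fun m hm => Qex_node_le_of_mem_nodeCandidates E lab hm
  · obtain ⟨T', hshape, hcost, herr⟩ :=
      exists_errorCountOn_eq_Qex E lab (DTree.node j x w u) l r k
    obtain ⟨m, hm, hle⟩ := exists_mem_nodeCandidates_le_errorCountOn E lab hx₀ hshape hcost
    exact herr ▸ (Nat.sInf_le hm).trans hle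

end Qex

theorem stmt9 {d n : ℕ} (E : Fin n → Fin d → ℝ) (lab : Fin n → Bool)
    (x₀ : ℝ) (hx₀ : ∀ (i : Fin n) (j : Fin d), x₀ < E i j)
    (l r : Fin d → EReal) (k' : ℕ) :
    (∀ c : Bool, Qex E lab (DTree.leaf c) l r k' =
      min ((box E l r).filter (fun i => lab i = blue)).card
        ((box E l r).filter (fun i => lab i = red)).card) ∧
    (∀ (j : Fin d) (x : ℝ) (w u : DTree (Fin d)),
      Qex E lab (DTree.node j x w u) l r k' =
        sInf (
          {m : ℕ | ∃ β ≤ k',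
            m = Qex E lab w l (Function.update r j (min (r j) ((x : ℝ) : EReal))) β
              + Qex E lab u (Function.update l j (max (l j) ((x : ℝ) : EReal))) r
                  (k' - β)}
          ∪ {m : ℕ | ∃ β, β + 1 ≤ k' ∧ ∃ j' : Fin d,
            ∃ y ∈ insert x₀ (Finset.univ.image (fun i : Fin n => E i j')),
              m = Qex E lab w l
                    (Function.update r j' (min (r j') ((y : ℝ) : EReal))) β
                + Qex E lab u
                    (Function.update l j' (max (l j') ((y : ℝ) : EReal))) r
                    (k' - β - 1)})) :=
  ⟨Qex_leaf E lab l r k', fun j x w u => Qex_node E lab hx₀ j x w u l r k'⟩
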